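/- Let ν ≥ -1/2. For all y ≥ x > 0, the modified Bessel function of the first kind satisfies I_ν(y)/I_ν(x) ≤ e^{y-x} (y/x)^ν, given the ratio bound I_{ν+1}(z)/I_ν(z) < 1 for all z > 0 when combined with the recurrence z I_ν'(z) = ν I_ν(z) + z I_{ν+1}(z). -/

import Mathlib

open Real

/-- Modified Bessel function of the first kind, defined by its series. -/
noncomputable def besselI (ν z : ℝ) : ℝ :=
  ∑' k : ℕ, (z / 2) ^ (ν + 2 * (k : ℝ)) / ((Nat.factorial k : ℝ) * Real.Gamma ((k : ℝ) + ν + 1))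

/-!
Writing `I_ν(z) = (z/2)^ν g((z/2)²)` with `g` the entire power series `∑ (k! Γ(k+ν+1))⁻¹ tᵏ`
shows that `I_ν` is positive and differentiable on `(0, ∞)`. The recurrence and the ratio bound
give `z I_ν'(z) ≤ (ν + z) I_ν(z)`, which says exactly that `w ↦ e^{-w} w^{-ν} I_ν(w)` is
antitone on `(0, ∞)`; comparing its values at `x ≤ y` is the inequality.
-/

open Filter Topology FormalMultilinearSeries
open scoped Nat

noncomputable def besselCoeff (ν : ℝ) (k : ℕ) : ℝ := ((k ! : ℝ) * Gamma (k + ν + 1))⁻¹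

section BesselSeries

variable {ν : ℝ} {k : ℕ}

lemma besselCoeff_pos (h : 0 < k + ν + 1) : 0 < besselCoeff ν k := by
  unfold besselCoeff
  have := Gamma_pos_of_pos h
  positivity

lemma besselCoeff_succ (h : 0 < k + ν + 1) :
    besselCoeff ν (k + 1) = besselCoeff ν k / ((k + 1) * (k + ν + 1)) := by
  have hΓ : Gamma ((k + 1 : ℕ) + ν + 1) = (k + ν + 1) * Gamma (k + ν + 1) := by
    rw [← Gamma_add_one h.ne']
    push_cast
    ring_nf
  simp only [besselCoeff, hΓ, Nat.factorial_succ]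
  push_cast
  field_simp

variable (ν)

lemma tendsto_besselCoeff_ratio :
    Tendsto (fun k ↦ ‖besselCoeff ν (k + 1)‖ / ‖besselCoeff ν k‖) atTop (𝓝 0) := by
  refine squeeze_zero' (Eventually.of_forall fun k ↦ by positivity) ?_
    tendsto_one_div_add_atTop_nhds_zero_nat
  filter_upwards [tendsto_natCast_atTop_atTop.eventually_gt_atTop (-ν)] with k hk
  have hpos : 0 < (k : ℝ) + ν + 1 := by linarith
  have hc := besselCoeff_pos hpos
  rw [besselCoeff_succ hpos, norm_div, norm_mul, div_div_cancel_left' (norm_ne_zero_iff.2 hc.ne'),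
    Real.norm_of_nonneg (by positivity : (0 : ℝ) ≤ k + 1), Real.norm_of_nonneg hpos.le, one_div]
  exact inv_anti₀ (by positivity) (le_mul_of_one_le_right (by positivity) (by linarith))

lemma radius_ofScalars_besselCoeff : (ofScalars ℝ (besselCoeff ν)).radius = ⊤ := by
  refine ofScalars_radius_eq_top_of_tendsto ℝ _ ?_ (tendsto_besselCoeff_ratio ν)
  filter_upwards [tendsto_natCast_atTop_atTop.eventually_gt_atTop (-ν)] with k hk
  exact (besselCoeff_pos (by linarith)).ne'

lemma hasSum_besselCoeff_mul_pow (t : ℝ) :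
    HasSum (fun k ↦ besselCoeff ν k * t ^ k) (ofScalarsSum (besselCoeff ν) t) := by
  have := (ofScalars ℝ (besselCoeff ν)).hasSum (x := t) (by simp [radius_ofScalars_besselCoeff ν])
  simp only [ofScalars_apply_eq, smul_eq_mul] at this
  exact this

lemma analyticAt_ofScalarsSum_besselCoeff (t : ℝ) :
    AnalyticAt ℝ (ofScalarsSum (besselCoeff ν)) t :=
  (ofScalars ℝ (besselCoeff ν)).analyticOnNhd t (by simp [radius_ofScalars_besselCoeff ν])

lemma besselI_eq_rpow_mul_ofScalarsSum {z : ℝ} (hz : 0 < z) :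
    besselI ν z = (z / 2) ^ ν * ofScalarsSum (besselCoeff ν) ((z / 2) ^ 2) := by
  rw [ofScalars_sum_eq, ← tsum_mul_left]
  refine tsum_congr fun k ↦ ?_
  rw [rpow_add (by positivity), rpow_mul_natCast (by positivity), rpow_two, smul_eq_mul,
    besselCoeff]
  ring

end BesselSeries

section

variable {ν z : ℝ}

lemma besselI_pos (hν : -1 < ν) (hz : 0 < z) : 0 < besselI ν z := by
  rw [besselI_eq_rpow_mul_ofScalarsSum ν hz]
  have hsum := hasSum_besselCoeff_mul_pow ν ((z / 2) ^ 2)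
  have hc (k : ℕ) : 0 < besselCoeff ν k := besselCoeff_pos (by linarith [k.cast_nonneg (α := ℝ)])
  refine mul_pos (by positivity) (hasSum_lt (fun k ↦ ?_) (i := 0) ?_ hasSum_zero hsum)
  · have := hc k
    positivity
  · simpa using hc 0

lemma differentiableAt_besselI (hz : 0 < z) : DifferentiableAt ℝ (besselI ν) z := by
  have hsmooth : DifferentiableAt ℝ
      (fun w ↦ (w / 2) ^ ν * ofScalarsSum (besselCoeff ν) ((w / 2) ^ 2)) z := by
    refine DifferentiableAt.mul ?_ ?_
    · exact (differentiableAt_id.div_const 2).rpow_const (Or.inl (by positivity))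
    · exact (analyticAt_ofScalarsSum_besselCoeff ν _).differentiableAt.comp z (by fun_prop)
  exact hsmooth.congr_of_eventuallyEq <|
    eventually_gt_nhds hz |>.mono fun w hw ↦ besselI_eq_rpow_mul_ofScalarsSum ν hw

end

section

variable {f f' : ℝ → ℝ} {ν : ℝ}

lemma antitoneOn_exp_neg_mul_rpow_neg_mul (hf : ∀ z, 0 < z → HasDerivAt f (f' z) z)
    (hf' : ∀ z, 0 < z → z * f' z ≤ (ν + z) * f z) :
    AntitoneOn (fun w ↦ exp (-w) * w ^ (-ν) * f w) (Set.Ioi 0) := by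
  have hderiv (w : ℝ) (hw : 0 < w) : HasDerivAt (fun w ↦ exp (-w) * w ^ (-ν) * f w)
      (exp (-w) * (w ^ (-ν) / w) * (w * f' w - (ν + w) * f w)) w := by
    have hexp : HasDerivAt (fun w : ℝ ↦ exp (-w)) (-exp (-w)) w := by
      simpa using (hasDerivAt_neg w).exp
    have hrpow := hasDerivAt_rpow_const (p := -ν) (Or.inl hw.ne')
    refine ((hexp.mul hrpow).mul (hf w hw)).congr_deriv ?_
    rw [rpow_sub_one hw.ne', Pi.mul_apply]
    field_simp
    ring
  refine antitoneOn_of_hasDerivWithinAt_nonpos (convex_Ioi 0)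
    (fun w hw ↦ (hderiv w hw).continuousAt.continuousWithinAt)
    (fun w hw ↦ (hderiv w (interior_subset hw)).hasDerivWithinAt) fun w hw ↦ ?_
  have hw : 0 < w := interior_subset hw
  exact mul_nonpos_of_nonneg_of_nonpos (by positivity) (sub_nonpos.2 (hf' w hw))

lemma div_le_exp_sub_mul_div_rpow (hf : ∀ z, 0 < z → HasDerivAt f (f' z) z)
    (hf' : ∀ z, 0 < z → z * f' z ≤ (ν + z) * f z) {x y : ℝ} (hx : 0 < x) (hxy : x ≤ y)
    (hfx : 0 < f x) : f y / f x ≤ exp (y - x) * (y / x) ^ ν := by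
  have hy : 0 < y := hx.trans_le hxy
  have hanti := antitoneOn_exp_neg_mul_rpow_neg_mul hf hf' hx hy hxy
  simp only [exp_neg, rpow_neg hy.le, rpow_neg hx.le] at hanti
  rw [div_le_iff₀ hfx, exp_sub, div_rpow hy.le hx.le]
  have : 0 < exp y * y ^ ν := by positivity
  field_simp at hanti ⊢
  linarith

end

theorem laforgia_inequality (ν : ℝ) (hν : -1/2 ≤ ν)
    (hrec : ∀ z : ℝ, 0 < z →
      z * deriv (besselI ν) z = ν * besselI ν z + z * besselI (ν + 1) z)
    (hratio : ∀ z : ℝ, 0 < z → besselI (ν + 1) z / besselI ν z < 1)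
    (x y : ℝ) (hx : 0 < x) (hxy : x ≤ y) :
    besselI ν y / besselI ν x ≤ Real.exp (y - x) * (y / x) ^ ν := by
  have hpos (z : ℝ) (hz : 0 < z) : 0 < besselI ν z := besselI_pos (by linarith) hz
  refine div_le_exp_sub_mul_div_rpow (fun z hz ↦ (differentiableAt_besselI hz).hasDerivAt)
    (fun z hz ↦ ?_) hx hxy (hpos x hx)
  have hlt : besselI (ν + 1) z < besselI ν z := (div_lt_one (hpos z hz)).1 (hratio z hz)
  rw [hrec z hz]
  linarith [mul_lt_mul_of_pos_left hlt hz]
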